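/- arXiv:math/0111309 — 2 statements merged into one kernel-verified Lean document; each statement's English description precedes it below -/
import Mathlib

section
/- Let n ≥ 1 and let w : ZMod n → ℝ be weights on the arcs of a cycle of length n. If the total sum ∑ i, w i < 0, then there exists a starting index i' such that every partial sum along the cycle starting from i' is negative; that is, for all m with 0 ≤ m ≤ n-1, ∑_{j=0}^{m} w(i' + j) < 0 (indices taken modulo n). -/
/-!
Let `S k` be the `k`-th prefix sum of the weights read periodically along the cycle. A full turn
adds the negative total, so `S (k + n) < S k`. Take `i < n` maximising `S` on `[0, n)`, the last
one among the maximisers; then `S j < S i` for every `j > i`, and the partial sum of length `m + 1`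
from `i` is `S (i + m + 1) - S i < 0`.
-/

open Finset

section PeriodicDescent

variable {α : Type*} [LinearOrder α] {S : ℕ → α} {n : ℕ}

theorem apply_add_mul_lt (hS : ∀ k, S (k + n) < S k) (r : ℕ) {q : ℕ} (hq : 0 < q) :
    S (r + q * n) < S r := by
  induction q, hq using Nat.le_induction with
  | base => simpa using hS r
  | succ q _ ih =>
    calc S (r + (q + 1) * n) = S (r + q * n + n) := by rw [add_mul, one_mul, add_assoc]
      _ < S (r + q * n) := hS _
      _ < S r := ih

theorem apply_lt_apply_mod (hS : ∀ k, S (k + n) < S k) {j : ℕ} (hj : n ≤ j) :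
    S j < S (j % n) := by
  have hn : 0 < n := Nat.pos_of_ne_zero fun h0 => (hS 0).ne (by rw [h0])
  have := apply_add_mul_lt hS (j % n) (Nat.div_pos hj hn)
  rwa [Nat.mod_add_div'] at this

/-- Tie-breaking by the index (lexicographically) makes the maximum strict to the right. -/
theorem exists_forall_apply_lt (hn : 0 < n) (hS : ∀ k, S (k + n) < S k) :
    ∃ i < n, ∀ j, i < j → S j < S i := by
  obtain ⟨i, hi, hmax⟩ :=
    (range n).exists_max_image (fun k => toLex (S k, k)) ⟨0, mem_range.mpr hn⟩
  have hle : ∀ k < n, S k ≤ S i := fun k hk =>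
    (Prod.Lex.le_iff.mp (hmax k (mem_range.mpr hk))).elim le_of_lt (fun h => h.1.le)
  refine ⟨i, mem_range.mp hi, fun j hij => ?_⟩
  rcases lt_or_ge j n with hj | hj
  · rcases Prod.Lex.le_iff.mp (hmax j (mem_range.mpr hj)) with h | ⟨-, h⟩
    · exact h
    · exact absurd hij (not_lt.mpr h)
  · exact (apply_lt_apply_mod hS hj).trans_le (hle _ (Nat.mod_lt j hn))

end PeriodicDescent

theorem ZMod.sum_range_natCast {M : Type*} [AddCommMonoid M] (n : ℕ) [NeZero n]
    (f : ZMod n → M) : ∑ j ∈ range n, f j = ∑ i, f i :=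
  sum_nbij' Nat.cast ZMod.val (fun _ _ => mem_univ _) (fun a _ => mem_range.mpr (ZMod.val_lt a))
    (fun _ ha => ZMod.val_cast_of_lt (mem_range.mp ha)) (fun a _ => ZMod.natCast_zmod_val a)
    (fun _ _ => rfl)

theorem ZMod.sum_range_add_natCast {M : Type*} [AddCommMonoid M] (n : ℕ) [NeZero n]
    (f : ZMod n → M) (a : ZMod n) : ∑ j ∈ range n, f (a + j) = ∑ i, f i := by
  rw [ZMod.sum_range_natCast n (fun x => f (a + x))]
  exact Equiv.sum_comp (Equiv.addLeft a) f

theorem cycle_negative_total_has_determining_vertex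
    (n : ℕ) [NeZero n] (w : ZMod n → ℝ)
    (h : ∑ i, w i < 0) :
    ∃ i' : ZMod n, ∀ m : ℕ, m ≤ n - 1 →
      ∑ j ∈ Finset.range (m + 1), w (i' + (j : ZMod n)) < 0 := by
  set S : ℕ → ℝ := fun k => ∑ j ∈ range k, w j
  have hS : ∀ k, S (k + n) < S k := fun k => by
    simp only [S, sum_range_add, Nat.cast_add, ZMod.sum_range_add_natCast n w k]
    linarith
  obtain ⟨i, -, hi⟩ := exists_forall_apply_lt (NeZero.pos n) hS
  refine ⟨i, fun m _ => ?_⟩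
  have hsum : ∑ j ∈ range (m + 1), w (i + (j : ZMod n)) = S (i + (m + 1)) - S i := by
    simp only [S, sum_range_add_sub_sum_range, Nat.cast_add]
  linarith [hi (i + (m + 1)) (by omega)]
end

section
/- Let w : Fin n → Fin n → ℝ be arc weights on a complete digraph on n vertices, and define for each k ≤ n the function d_k i j = minimum over all paths from i to j whose intermediate vertices all have index < k of the total path weight (with d_0 i j = w i j). Then d_{k+1} i j = min (d_k i j) (d_k i k + d_k k j), provided no cycle through vertices of index < k+1 has negative total weight. -/
/-!
A walk whose intermediate vertices lie below `k + 1` either never stops at `k` in between, and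
then its intermediate vertices lie below `k`, or it can be cut at a visit to `k` into a walk
`i → k` and a walk `k → j`. These may still revisit `k`; but the stretch between two visits is a
closed walk through vertices below `k + 1`, of nonnegative weight, so cutting it out (induction
on the length) leaves a walk with intermediate vertices below `k` that is no heavier.
Conversely, such walks, and their concatenations through `k`, have intermediate vertices
below `k + 1`.
-/

/-- `IsWalkWeight n w i j k m v x` : `v` is a walk of length `m` from `i` to `j`
whose intermediate vertices all have index `< k`, with total weight `x`. -/
def IsWalkWeight (n : ℕ) (w : Fin n → Fin n → ℝ) (i j : Fin n) (k : ℕ)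
    (m : ℕ) (v : ℕ → Fin n) (x : ℝ) : Prop :=
  0 < m ∧ v 0 = i ∧ v m = j ∧ (∀ t : ℕ, 0 < t → t < m → (v t : ℕ) < k) ∧
    x = ∑ t ∈ Finset.range m, w (v t) (v (t + 1))

open Finset

def walkWeight {n : ℕ} (w : Fin n → Fin n → ℝ) (m : ℕ) (v : ℕ → Fin n) : ℝ :=
  ∑ t ∈ range m, w (v t) (v (t + 1))

def walkWeights (n : ℕ) (w : Fin n → Fin n → ℝ) (i j : Fin n) (k : ℕ) : Set ℝ :=
  {x | ∃ m v, IsWalkWeight n w i j k m v x}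

def NoNegCycle {n : ℕ} (w : Fin n → Fin n → ℝ) (k : ℕ) : Prop :=
  ∀ m : ℕ, ∀ v : ℕ → Fin n, 0 < m → v 0 = v m → (∀ t : ℕ, t ≤ m → (v t : ℕ) < k) →
    0 ≤ walkWeight w m v

section

variable {n : ℕ} {w : Fin n → Fin n → ℝ}

theorem walkWeight_add (a b : ℕ) (v : ℕ → Fin n) :
    walkWeight w (a + b) v = walkWeight w a v + walkWeight w b (fun s => v (a + s)) := by
  simp only [walkWeight, sum_range_add, add_assoc]

theorem walkWeight_congr {m : ℕ} {v v' : ℕ → Fin n} (h : ∀ t ≤ m, v t = v' t) :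
    walkWeight w m v = walkWeight w m v' :=
  sum_congr rfl fun t ht => by
    rw [mem_range] at ht
    rw [h t ht.le, h (t + 1) ht]

namespace IsWalkWeight

variable {i j l : Fin n} {k k' m m₁ m₂ : ℕ} {v v₁ v₂ : ℕ → Fin n} {x x₁ x₂ : ℝ}

theorem mono (h : IsWalkWeight n w i j k m v x) (hk : k ≤ k') :
    IsWalkWeight n w i j k' m v x :=
  let ⟨hm, h0, hme, hint, hx⟩ := h
  ⟨hm, h0, hme, fun t ht htm => (hint t ht htm).trans_le hk, hx⟩

theorem append (h₁ : IsWalkWeight n w i l k m₁ v₁ x₁) (h₂ : IsWalkWeight n w l j k m₂ v₂ x₂)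
    (hl : (l : ℕ) < k) :
    IsWalkWeight n w i j k (m₁ + m₂) (fun s => if s < m₁ then v₁ s else v₂ (s - m₁))
      (x₁ + x₂) := by
  obtain ⟨hm₁, h₁0, h₁e, h₁int, rfl⟩ := h₁
  obtain ⟨hm₂, h₂0, h₂e, h₂int, rfl⟩ := h₂
  refine ⟨by omega, by simp [hm₁, h₁0], by simp [h₂e], fun t ht htm => ?_, ?_⟩
  · dsimp only
    split_ifs with htm₁
    · exact h₁int t ht htm₁
    · obtain rfl | hlt := eq_or_lt_of_le (not_lt.1 htm₁)
      · simpa [h₂0] using hl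
      · exact h₂int _ (by omega) (by omega)
  · change walkWeight w m₁ v₁ + walkWeight w m₂ v₂ = walkWeight w (m₁ + m₂) _
    rw [walkWeight_add]
    congr 1
    · refine walkWeight_congr fun t ht => ?_
      obtain rfl | hlt := eq_or_lt_of_le ht
      · simp [h₁e, h₂0]
      · simp [hlt]
    · simp

theorem split (h : IsWalkWeight n w i j k m v x) {t : ℕ} (ht : 0 < t) (htm : t < m) :
    ∃ x₁ x₂, IsWalkWeight n w i (v t) k t v x₁ ∧
      IsWalkWeight n w (v t) j k (m - t) (fun s => v (t + s)) x₂ ∧ x = x₁ + x₂ := by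
  obtain ⟨-, h0, hme, hint, rfl⟩ := h
  refine ⟨_, _, ⟨ht, h0, rfl, fun s hs hst => hint s hs (hst.trans htm), rfl⟩,
    ⟨by omega, rfl, by simp [Nat.add_sub_cancel' htm.le, hme],
      fun s hs hsm => hint _ (by omega) (by omega), rfl⟩, ?_⟩
  change walkWeight w m v = walkWeight w t v + walkWeight w (m - t) _
  rw [← walkWeight_add, Nat.add_sub_cancel' htm.le]

theorem of_succ {K : Fin n} (h : IsWalkWeight n w i j (K + 1) m v x)
    (hK : ∀ t, 0 < t → t < m → v t ≠ K) : IsWalkWeight n w i j K m v x :=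
  let ⟨hm, h0, hme, hint, hx⟩ := h
  ⟨hm, h0, hme, fun t ht htm =>
    (Nat.lt_succ_iff.1 (hint t ht htm)).lt_of_ne fun hvt => hK t ht htm (Fin.ext hvt), hx⟩

end IsWalkWeight

theorem NoNegCycle.nonneg {i : Fin n} {k m : ℕ} {v : ℕ → Fin n} {x : ℝ} (hneg : NoNegCycle w k)
    (h : IsWalkWeight n w i i k m v x) (hi : (i : ℕ) < k) : 0 ≤ x := by
  obtain ⟨hm, h0, hme, hint, rfl⟩ := h
  refine hneg m v hm (h0.trans hme.symm) fun t ht => ?_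
  rcases Nat.eq_zero_or_pos t with rfl | ht₀
  · rwa [h0]
  · obtain rfl | htm := eq_or_lt_of_le ht
    · rwa [hme]
    · exact hint t ht₀ htm

variable {i j l K : Fin n} {k k' : ℕ} {x y : ℝ}

theorem walkWeights_mono (hk : k ≤ k') : walkWeights n w i j k ⊆ walkWeights n w i j k' :=
  fun _ ⟨m, v, h⟩ => ⟨m, v, h.mono hk⟩

theorem add_mem_walkWeights (hx : x ∈ walkWeights n w i l k) (hy : y ∈ walkWeights n w l j k)
    (hl : (l : ℕ) < k) : x + y ∈ walkWeights n w i j k :=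
  let ⟨_, _, hx⟩ := hx
  let ⟨_, _, hy⟩ := hy
  ⟨_, _, hx.append hy hl⟩

theorem exists_mem_walkWeights_le_of_isWalkWeight_from (hneg : NoNegCycle w (K + 1)) :
    ∀ {m v x}, IsWalkWeight n w K j (K + 1) m v x → ∃ y ∈ walkWeights n w K j K, y ≤ x := by
  intro m
  induction m using Nat.strong_induction_on with
  | _ m ih =>
    intro v x h
    by_cases hK : ∃ t, 0 < t ∧ t < m ∧ v t = K
    · obtain ⟨t, ht, htm, hvt⟩ := hK
      obtain ⟨x₁, x₂, hcycle, hrest, rfl⟩ := h.split ht htm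
      rw [hvt] at hcycle hrest
      obtain ⟨y, hy, hyx⟩ := ih (m - t) (by omega) hrest
      have := hneg.nonneg hcycle K.val.lt_succ_self
      exact ⟨y, hy, by linarith⟩
    · push Not at hK
      exact ⟨x, ⟨m, v, h.of_succ hK⟩, le_rfl⟩

theorem exists_mem_walkWeights_le_of_isWalkWeight_to (hneg : NoNegCycle w (K + 1)) :
    ∀ {m v x}, IsWalkWeight n w i K (K + 1) m v x → ∃ y ∈ walkWeights n w i K K, y ≤ x := by
  intro m
  induction m using Nat.strong_induction_on with
  | _ m ih =>
    intro v x h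
    by_cases hK : ∃ t, 0 < t ∧ t < m ∧ v t = K
    · obtain ⟨t, ht, htm, hvt⟩ := hK
      obtain ⟨x₁, x₂, hrest, hcycle, rfl⟩ := h.split ht htm
      rw [hvt] at hcycle hrest
      obtain ⟨y, hy, hyx⟩ := ih t htm hrest
      have := hneg.nonneg hcycle K.val.lt_succ_self
      exact ⟨y, hy, by linarith⟩
    · push Not at hK
      exact ⟨x, ⟨m, v, h.of_succ hK⟩, le_rfl⟩

theorem exists_le_of_mem_walkWeights_succ (hneg : NoNegCycle w (K + 1))
    (hx : x ∈ walkWeights n w i j (K + 1)) :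
    (∃ y ∈ walkWeights n w i j K, y ≤ x) ∨
      ∃ y₁ ∈ walkWeights n w i K K, ∃ y₂ ∈ walkWeights n w K j K, y₁ + y₂ ≤ x := by
  obtain ⟨m, v, h⟩ := hx
  by_cases hK : ∃ t, 0 < t ∧ t < m ∧ v t = K
  · obtain ⟨t, ht, htm, hvt⟩ := hK
    obtain ⟨x₁, x₂, h₁, h₂, rfl⟩ := h.split ht htm
    rw [hvt] at h₁ h₂
    obtain ⟨y₁, hy₁, hle₁⟩ := exists_mem_walkWeights_le_of_isWalkWeight_to hneg h₁
    obtain ⟨y₂, hy₂, hle₂⟩ := exists_mem_walkWeights_le_of_isWalkWeight_from hneg h₂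
    exact Or.inr ⟨y₁, hy₁, y₂, hy₂, add_le_add hle₁ hle₂⟩
  · push Not at hK
    exact Or.inl ⟨x, ⟨m, v, h.of_succ hK⟩, le_rfl⟩

end

theorem floyd_warshall_recurrence
    (n : ℕ) (w : Fin n → Fin n → ℝ) (d : ℕ → Fin n → Fin n → ℝ)
    (hd : ∀ k : ℕ, ∀ i j : Fin n,
      IsLeast {x : ℝ | ∃ m : ℕ, ∃ v : ℕ → Fin n, IsWalkWeight n w i j k m v x} (d k i j))
    (k : ℕ) (hk : k < n)
    (hneg : ∀ m : ℕ, ∀ v : ℕ → Fin n, 0 < m → v 0 = v m →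
      (∀ t : ℕ, t ≤ m → (v t : ℕ) < k + 1) →
      0 ≤ ∑ t ∈ Finset.range m, w (v t) (v (t + 1))) :
    ∀ i j : Fin n,
      d (k + 1) i j = min (d k i j) (d k i ⟨k, hk⟩ + d k ⟨k, hk⟩ j) := by
  intro i j
  have hd : ∀ k i j, IsLeast (walkWeights n w i j k) (d k i j) := hd
  set K : Fin n := ⟨k, hk⟩
  obtain ⟨hmem, hlow⟩ := hd (k + 1) i j
  refine le_antisymm (le_min ?_ ?_) ?_
  · exact hlow (walkWeights_mono k.le_succ (hd k i j).1)
  · exact hlow (add_mem_walkWeights (walkWeights_mono k.le_succ (hd k i K).1)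
      (walkWeights_mono k.le_succ (hd k K j).1) k.lt_succ_self)
  · rcases exists_le_of_mem_walkWeights_succ (K := K) hneg hmem with
      ⟨y, hy, hle⟩ | ⟨y₁, hy₁, y₂, hy₂, hle⟩
    · exact (min_le_left _ _).trans (((hd k i j).2 hy).trans hle)
    · exact (min_le_right _ _).trans
        ((add_le_add ((hd k i K).2 hy₁) ((hd k K j).2 hy₂)).trans hle)
end
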